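/- arXiv:1801.10103 — 7 statements merged into one kernel-verified Lean document; each statement's English description precedes it below -/
import Mathlib

section
/- Let H be a complex Hilbert space, A a bounded linear operator on H, I a countable index set, and g : I → H. Suppose there exist constants 0 < c ≤ C such that for every f ∈ H, c‖f‖² ≤ ∑_{i∈I} ∑_{n=0}^∞ |⟨f, Aⁿ g_i⟩|² ≤ C‖f‖² (i.e., the iterated system {Aⁿ g_i : i ∈ I, n ≥ 0} is a frame for H). Then for every f ∈ H, ‖(A*)ⁿ f‖ → 0 as n → ∞, where A* denotes the Hilbert-space adjoint of A. -/
open scoped InnerProductSpace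

/-- If the iterated system `{Aⁿ gᵢ : i ∈ I, n ≥ 0}` is a frame for the complex Hilbert
space `H`, then `‖(A*)ⁿ f‖ → 0` for every `f ∈ H`. -/
theorem iterated_frame_adjoint_powers_tendsto_zero
    {H : Type*} [NormedAddCommGroup H] [InnerProductSpace ℂ H] [CompleteSpace H]
    {I : Type*} [Countable I] (A : H →L[ℂ] H) (g : I → H)
    (hframe : ∃ c C : ℝ, 0 < c ∧ c ≤ C ∧ ∀ f : H,
      c * ‖f‖ ^ 2 ≤ ∑' i : I, ∑' n : ℕ, ‖⟪f, (A ^ n) (g i)⟫_ℂ‖ ^ 2 ∧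
      ∑' i : I, ∑' n : ℕ, ‖⟪f, (A ^ n) (g i)⟫_ℂ‖ ^ 2 ≤ C * ‖f‖ ^ 2) :
    ∀ f : H, Filter.Tendsto (fun n : ℕ => ‖((ContinuousLinearMap.adjoint A) ^ n) f‖)
      Filter.atTop (nhds 0) := by
  obtain ⟨c, C, hc, hcC, hfr⟩ := hframe
  intro f
  set B := ContinuousLinearMap.adjoint A with hB
  -- the basic terms
  set T : I → ℕ → ℝ := fun i m => ‖⟪f, (A ^ m) (g i)⟫_ℂ‖ ^ 2 with hT
  have hTnn : ∀ i m, 0 ≤ T i m := fun i m => by positivity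
  set t : I → ℝ := fun i => ∑' m, T i m with ht
  set S : ℕ → I → ℝ := fun n i => ∑' m, T i (m + n) with hS
  -- the key algebraic identity
  have hpow : ∀ n : ℕ, B ^ n = ContinuousLinearMap.adjoint (A ^ n) := by
    intro n
    rw [hB, ← ContinuousLinearMap.star_eq_adjoint, ← ContinuousLinearMap.star_eq_adjoint,
      star_pow]
  have hterm : ∀ (n m : ℕ) (i : I),
      ‖⟪(B ^ n) f, (A ^ m) (g i)⟫_ℂ‖ ^ 2 = T i (m + n) := by
    intro n m i
    have h2 : (A ^ (m + n)) (g i) = (A ^ n) ((A ^ m) (g i)) := by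
      rw [add_comm, pow_add]; rfl
    rw [hpow, ContinuousLinearMap.adjoint_inner_left]
    simp only [hT, h2]
  -- rewrite the frame inequality at `(B ^ n) f`
  have hkey : ∀ n : ℕ, c * ‖(B ^ n) f‖ ^ 2 ≤ ∑' i, S n i := by
    intro n
    have h1 := (hfr ((B ^ n) f)).1
    have h2 : (∑' i : I, ∑' m : ℕ, ‖⟪(B ^ n) f, (A ^ m) (g i)⟫_ℂ‖ ^ 2) = ∑' i, S n i := by
      refine tsum_congr fun i => tsum_congr fun m => ?_
      exact hterm n m i
    rwa [h2] at h1
  -- domination : `S n i ≤ t i`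
  have hSnn : ∀ n i, 0 ≤ S n i := fun n i => tsum_nonneg fun m => hTnn i _
  have hSle : ∀ n i, S n i ≤ t i := by
    intro n i
    by_cases h : Summable (T i)
    · have := Summable.sum_add_tsum_nat_add (f := T i) n h
      calc S n i ≤ ∑ k ∈ Finset.range n, T i k + S n i :=
            le_add_of_nonneg_left (Finset.sum_nonneg fun k _ => hTnn i k)
        _ = t i := this
    · have h' : ¬ Summable fun m => T i (m + n) := fun hh => h ((summable_nat_add_iff n).1 hh)
      rw [hS, ht]
      simp only [tsum_eq_zero_of_not_summable h', tsum_eq_zero_of_not_summable h, le_refl]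
  -- case : the bound is not summable, then `f = 0`
  by_cases hsum : Summable t
  case neg =>
    have h0 := (hfr f).1
    have : (∑' i : I, ∑' m : ℕ, ‖⟪f, (A ^ m) (g i)⟫_ℂ‖ ^ 2) = 0 :=
      tsum_eq_zero_of_not_summable hsum
    rw [this] at h0
    have hf0 : f = 0 := by
      have hn2 : ‖f‖ ^ 2 ≤ 0 := by
        by_contra hpos
        push_neg at hpos
        nlinarith [mul_pos hc hpos]
      have hn : ‖f‖ ^ 2 = 0 := le_antisymm hn2 (sq_nonneg _)
      have := pow_eq_zero_iff (two_ne_zero) |>.1 hn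
      exact norm_eq_zero.1 this
    simp only [hf0, map_zero, norm_zero]
    exact tendsto_const_nhds
  -- main case : dominated convergence
  case pos =>
    have hlim : ∀ i, Filter.Tendsto (fun n => S n i) Filter.atTop (nhds 0) := by
      intro i
      exact tendsto_sum_nat_add (T i)
    have hdom : Filter.Tendsto (fun n => ∑' i, S n i) Filter.atTop (nhds (∑' _ : I, (0 : ℝ))) := by
      refine tendsto_tsum_of_dominated_convergence hsum hlim ?_
      filter_upwards with n i
      rw [Real.norm_eq_abs, abs_of_nonneg (hSnn n i)]
      exact hSle n i
    rw [tsum_zero] at hdom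
    -- squeeze
    have hsq : Filter.Tendsto (fun n => c * ‖(B ^ n) f‖ ^ 2) Filter.atTop (nhds 0) := by
      refine squeeze_zero (fun n => by positivity) (fun n => hkey n) hdom
    have hsq2 : Filter.Tendsto (fun n => ‖(B ^ n) f‖ ^ 2) Filter.atTop (nhds 0) := by
      have := hsq.const_mul (c⁻¹)
      simpa [← mul_assoc, inv_mul_cancel₀ hc.ne'] using this
    have : Filter.Tendsto (fun n => Real.sqrt (‖(B ^ n) f‖ ^ 2)) Filter.atTop
        (nhds (Real.sqrt 0)) := (Real.continuous_sqrt.tendsto 0).comp hsq2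
    simpa [Real.sqrt_sq (norm_nonneg _)] using this
end

section
/- Let λ : ℕ → ℝ be a bounded sequence, L > 0 a real number, I a countable index set, and g : I → ℓ²(ℕ, ℂ). Then the following are equivalent: (a) for every f ∈ ℓ²(ℕ, ℂ), if ∑_{n=0}^∞ conj(f(n))·(λ(n))^t·g_i(n) = 0 for every i ∈ I and every t ∈ [0, L], then f = 0 (i.e., the system {D^t g_i : i ∈ I, t ∈ [0, L]} is complete in ℓ²(ℕ, ℂ), having trivial orthogonal complement); (b) for every v ∈ ℝ and every f ∈ ℓ²(ℕ, ℂ) with f(n) = 0 whenever λ(n) ≠ v, if ∑_{n=0}^∞ conj(f(n))·g_i(n) = 0 for every i ∈ I, then f = 0 (i.e., for each eigenvalue v of D, the coordinate projections of the vectors g_i onto the eigenspace {f : f(n) = 0 whenever λ(n) ≠ v} are complete in that eigenspace). -/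
/-!
For the nontrivial direction fix `f` orthogonal to every `D^t gᵢ` and put `aₙ = conj (f n) * gᵢ n`,
an absolutely summable sequence. The series `s ↦ ∑ aₙ λₙ ^ s` is holomorphic on the half-plane
`0 < re s` and vanishes on `(0, L]`, hence on the whole half-plane: all moments `∑ aₙ λₙ ^ m`
vanish (`m = 0` is the case `t = 0`), hence so does `∑ aₙ p(λₙ)` for every polynomial `p`.
The polynomials `(1 - ((X - v) / c) ^ 2) ^ k` are bounded by `1` on the range of `λ` and converge
to the indicator of `{v}` there, so dominated convergence gives `∑_{λₙ = v} aₙ = 0`: the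
projection of `f` onto each eigenspace is orthogonal to every `gᵢ`, hence zero.
-/

open Filter Topology Polynomial

lemma norm_cpow_le_of_norm_le {z s : ℂ} {M A B : ℝ} (hz : ‖z‖ ≤ M) (hre : 0 ≤ s.re)
    (hA : s.re ≤ A) (hB : |s.im| ≤ B) :
    ‖z ^ s‖ ≤ max M 1 ^ A * Real.exp (Real.pi * B) := by
  have hpow : ‖z‖ ^ s.re ≤ max M 1 ^ A :=
    (Real.rpow_le_rpow (norm_nonneg z) (hz.trans (le_max_left M 1)) hre).trans
      (Real.rpow_le_rpow_of_exponent_le (le_max_right M 1) hA)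
  have harg : -(Complex.arg z * s.im) ≤ Real.pi * B := by
    refine (neg_le_abs _).trans ?_
    rw [abs_mul]
    exact mul_le_mul (Complex.abs_arg_le_pi z) hB (abs_nonneg _) Real.pi_pos.le
  calc ‖z ^ s‖ ≤ ‖z‖ ^ s.re / Real.exp (Complex.arg z * s.im) := Complex.norm_cpow_le z s
    _ = ‖z‖ ^ s.re * Real.exp (-(Complex.arg z * s.im)) := by
      rw [Real.exp_neg, div_eq_mul_inv]
    _ ≤ max M 1 ^ A * Real.exp (Real.pi * B) := by gcongr

section CpowSeries

variable {ι : Type*} {a z : ι → ℂ} {x : ι → ℝ} {M L : ℝ}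

lemma differentiableOn_tsum_mul_cpow (hz : ∀ n, ‖z n‖ ≤ M) (ha : Summable fun n => ‖a n‖) :
    DifferentiableOn ℂ (fun s => ∑' n, a n * z n ^ s) {s : ℂ | 0 < s.re} := by
  intro s₀ hs₀
  set r := s₀.re / 2 with hr_def
  have hr : 0 < r := half_pos hs₀
  have hball : ∀ s ∈ Metric.ball s₀ r, 0 < s.re ∧ s.re ≤ 2 * s₀.re ∧ |s.im| ≤ |s₀.im| + r := by
    intro s hs
    rw [Metric.mem_ball, dist_eq_norm] at hs
    have hre := abs_lt.mp ((Complex.abs_re_le_norm (s - s₀)).trans_lt hs)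
    have him := (Complex.abs_im_le_norm (s - s₀)).trans_lt hs
    rw [Complex.sub_re] at hre
    rw [Complex.sub_im] at him
    have him' := abs_sub_abs_le_abs_sub s.im s₀.im
    have hs₀' : 0 < s₀.re := hs₀
    refine ⟨by linarith, by linarith, by linarith⟩
  have hdiff : DifferentiableOn ℂ (fun s => ∑' n, a n * z n ^ s) (Metric.ball s₀ r) := by
    refine Complex.differentiableOn_tsum_of_summable_norm
      (ha.mul_right (max M 1 ^ (2 * s₀.re) * Real.exp (Real.pi * (|s₀.im| + r))))
      (fun n s hs => ?_) Metric.isOpen_ball fun n s hs => ?_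
    · have hs0 : s ≠ 0 := ne_of_apply_ne Complex.re (hball s hs).1.ne'
      exact ((differentiableAt_id.const_cpow (Or.inr hs0)).const_mul (a n)).differentiableWithinAt
    · obtain ⟨hre, hA, hB⟩ := hball s hs
      rw [norm_mul]
      exact mul_le_mul_of_nonneg_left (norm_cpow_le_of_norm_le (hz n) hre.le hA hB) (norm_nonneg _)
  exact (hdiff.differentiableAt (Metric.ball_mem_nhds s₀ hr)).differentiableWithinAt

lemma tsum_mul_pow_eq_zero_of_tsum_mul_cpow_eq_zero (hz : ∀ n, ‖z n‖ ≤ M)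
    (ha : Summable fun n => ‖a n‖) (hL : 0 < L)
    (h : ∀ t ∈ Set.Icc (0 : ℝ) L, ∑' n, a n * z n ^ (t : ℂ) = 0) (m : ℕ) :
    ∑' n, a n * z n ^ m = 0 := by
  have hmid : ((L / 2 : ℝ) : ℂ) ∈ {s : ℂ | 0 < s.re} := by simpa using hL
  have hfreq : ∃ᶠ s in 𝓝[≠] ((L / 2 : ℝ) : ℂ), ∑' n, a n * z n ^ s = 0 := by
    have hreal : Tendsto (fun t : ℝ => (t : ℂ)) (𝓝[≠] (L / 2)) (𝓝[≠] ((L / 2 : ℝ) : ℂ)) :=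
      Complex.continuous_ofReal.continuousWithinAt.tendsto_nhdsWithin fun t ht => by
        rw [Set.mem_compl_singleton_iff] at ht ⊢
        exact_mod_cast ht
    refine hreal.frequently (Eventually.frequently ?_)
    filter_upwards [nhdsWithin_le_nhds (Icc_mem_nhds (half_pos hL) (half_lt_self hL))]
      with t ht using h t ht
  have hanalytic := (differentiableOn_tsum_mul_cpow hz ha).analyticOnNhd
    (isOpen_lt continuous_const Complex.continuous_re)
  have hF := hanalytic.eqOn_zero_of_preconnected_of_frequently_eq_zero
    (convex_halfSpace_re_gt 0).isPreconnected hmid hfreq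
  rcases m.eq_zero_or_pos with rfl | hm
  · simpa using h 0 ⟨le_rfl, hL.le⟩
  · simpa using hF (show (m : ℂ) ∈ {s : ℂ | 0 < s.re} by simpa using hm)

lemma tsum_mul_eval_eq_zero (hz : ∀ n, ‖z n‖ ≤ M) (ha : Summable fun n => ‖a n‖)
    (hmom : ∀ m : ℕ, ∑' n, a n * z n ^ m = 0) (p : ℂ[X]) :
    ∑' n, a n * p.eval (z n) = 0 := by
  have hsumm (i : ℕ) : Summable fun n => a n * z n ^ i :=
    (ha.mul_right (M ^ i)).of_norm_bounded fun n => by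
      rw [norm_mul, norm_pow]
      exact mul_le_mul_of_nonneg_left (pow_le_pow_left₀ (norm_nonneg _) (hz n) i) (norm_nonneg _)
  calc ∑' n, a n * p.eval (z n)
      = ∑' n, ∑ i ∈ Finset.range (p.natDegree + 1), p.coeff i * (a n * z n ^ i) := by
        refine tsum_congr fun n => ?_
        rw [eval_eq_sum_range, Finset.mul_sum]
        exact Finset.sum_congr rfl fun i _ => by ring
    _ = ∑ i ∈ Finset.range (p.natDegree + 1), p.coeff i * ∑' n, a n * z n ^ i := by
        rw [Summable.tsum_finsetSum fun i _ => (hsumm i).mul_left _]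
        simp only [tsum_mul_left]
    _ = 0 := by simp [hmom]

lemma tsum_ite_eq_zero_of_tsum_mul_eval_eq_zero
    (hx : ∀ n, |x n| ≤ M) (ha : Summable fun n => ‖a n‖)
    (hp : ∀ p : ℂ[X], ∑' n, a n * p.eval (x n : ℂ) = 0) (v : ℝ) :
    ∑' n, (if x n = v then a n else 0) = 0 := by
  set c := |M| + |v| + 1
  have hc : 0 < c := by positivity
  set r : ι → ℝ := fun n => 1 - ((x n - v) / c) ^ 2
  have hr_sq (n : ι) : ((x n - v) / c) ^ 2 < 1 := by
    rw [sq_lt_one_iff_abs_lt_one, abs_div, abs_of_pos hc, div_lt_one hc]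
    linarith [abs_sub (x n) v, le_abs_self M, hx n]
  have hr_nonneg (n : ι) : 0 ≤ r n := by linarith [hr_sq n]
  have hr_lt (n : ι) (hn : x n ≠ v) : r n < 1 := by
    have hne : x n - v ≠ 0 := sub_ne_zero.mpr hn
    have hpos : 0 < ((x n - v) / c) ^ 2 := by positivity
    linarith
  have hzero (k : ℕ) : ∑' n, a n * (r n : ℂ) ^ k = 0 := by
    have heval (n : ι) : ((1 - C ((c : ℂ)⁻¹ ^ 2) * (X - C (v : ℂ)) ^ 2) ^ k).eval (x n : ℂ)
        = (r n : ℂ) ^ k := by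
      simp only [eval_pow, eval_sub, eval_mul, eval_C, eval_X, eval_one, r]
      push_cast
      ring
    exact (tsum_congr fun n => congrArg (a n * ·) (heval n)).symm.trans (hp _)
  have hlim : Tendsto (fun k : ℕ => ∑' n, a n * (r n : ℂ) ^ k) atTop
      (𝓝 (∑' n, if x n = v then a n else 0)) := by
    refine tendsto_tsum_of_dominated_convergence ha (fun n => ?_)
      (Eventually.of_forall fun k n => ?_)
    · by_cases hn : x n = v
      · simp [r, hn]
      · have hr1 : ‖(r n : ℂ)‖ < 1 := by
          rw [Complex.norm_real, Real.norm_eq_abs, abs_of_nonneg (hr_nonneg n)]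
          exact hr_lt n hn
        simpa [hn] using (tendsto_pow_atTop_nhds_zero_of_norm_lt_one hr1).const_mul (a n)
    · rw [norm_mul, norm_pow, Complex.norm_real, Real.norm_eq_abs, abs_of_nonneg (hr_nonneg n)]
      refine mul_le_of_le_one_right (norm_nonneg _) (pow_le_one₀ (hr_nonneg n) ?_)
      linarith [sq_nonneg ((x n - v) / c)]
  simp only [hzero] at hlim
  exact tendsto_nhds_unique hlim tendsto_const_nhds

lemma tsum_ite_eq_zero_of_tsum_mul_cpow_eq_zero
    (hx : ∀ n, |x n| ≤ M) (ha : Summable fun n => ‖a n‖) (hL : 0 < L)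
    (h : ∀ t ∈ Set.Icc (0 : ℝ) L, ∑' n, a n * (x n : ℂ) ^ (t : ℂ) = 0) (v : ℝ) :
    ∑' n, (if x n = v then a n else 0) = 0 := by
  have hx' (n : ι) : ‖(x n : ℂ)‖ ≤ M := by simpa using hx n
  have hmom := tsum_mul_pow_eq_zero_of_tsum_mul_cpow_eq_zero hx' ha hL h
  exact tsum_ite_eq_zero_of_tsum_mul_eval_eq_zero hx ha (tsum_mul_eval_eq_zero hx' ha hmom) v

end CpowSeries

lemma summable_norm_conj_mul {α : Type*} (f g : lp (fun _ : α => ℂ) 2) :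
    Summable fun n => ‖starRingEnd ℂ (f n) * g n‖ := by
  simpa [norm_mul] using lp.summable_mul (by simpa using Real.HolderConjugate.two_two) f g

lemma memℓp_indicator {α E : Type*} [NormedAddCommGroup E] {p : ENNReal}
    (f : lp (fun _ : α => E) p) (s : Set α) : Memℓp (s.indicator f) p :=
  (lp.memℓp f).mono' fun _ => norm_indicator_le_norm_self _ _

theorem diagonal_semicontinuous_complete_iff_eigenspace_complete_general
    (lam : ℕ → ℝ) (hlam : ∃ M : ℝ, ∀ n : ℕ, |lam n| ≤ M)
    (L : ℝ) (hL : 0 < L)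
    {I : Type*} (g : I → lp (fun _ : ℕ => ℂ) 2) :
    (∀ f : lp (fun _ : ℕ => ℂ) 2,
        (∀ (i : I) (t : ℝ), t ∈ Set.Icc (0 : ℝ) L →
          ∑' n : ℕ, (starRingEnd ℂ) (f n) * ((lam n : ℂ) ^ (t : ℂ)) * g i n = 0) → f = 0)
      ↔
    (∀ (v : ℝ) (f : lp (fun _ : ℕ => ℂ) 2), (∀ n : ℕ, lam n ≠ v → f n = 0) →
        (∀ i : I, ∑' n : ℕ, (starRingEnd ℂ) (f n) * g i n = 0) → f = 0) := by
  obtain ⟨M, hM⟩ := hlam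
  constructor
  · intro hcomplete v f hf horth
    refine hcomplete f fun i t _ => ?_
    have hterm (n : ℕ) : starRingEnd ℂ (f n) * (lam n : ℂ) ^ (t : ℂ) * g i n
        = (v : ℂ) ^ (t : ℂ) * (starRingEnd ℂ (f n) * g i n) := by
      by_cases hn : lam n = v
      · rw [hn]; ring
      · simp [hf n hn]
    rw [tsum_congr hterm, tsum_mul_left, horth i, mul_zero]
  · intro heig f horth
    have hproj (v : ℝ) (i : I) :
        ∑' n, (if lam n = v then starRingEnd ℂ (f n) * g i n else 0) = 0 :=
      tsum_ite_eq_zero_of_tsum_mul_cpow_eq_zero hM (summable_norm_conj_mul f (g i)) hL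
        (fun t ht => by simpa only [mul_right_comm] using horth i t ht) v
    ext n
    let fₙ : lp (fun _ : ℕ => ℂ) 2 := ⟨{m | lam m = lam n}.indicator f, memℓp_indicator f _⟩
    have hsupp (m : ℕ) (hm : lam m ≠ lam n) : fₙ m = 0 :=
      Set.indicator_of_notMem (s := {m | lam m = lam n}) hm _
    have hfₙ : fₙ = 0 := heig (lam n) fₙ hsupp fun i => by
      simpa [fₙ, Set.indicator_apply, apply_ite] using hproj (lam n) i
    simpa [fₙ] using congrArg (fun u : lp (fun _ : ℕ => ℂ) 2 => u n) hfₙ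

/-- Completeness of the semi-continuous system `{D^t gᵢ : i ∈ I, t ∈ [0,L]}` generated by a
bounded diagonal operator `D` (with real diagonal `lam`) on `ℓ²(ℕ, ℂ)` is equivalent to the
completeness, in each eigenspace of `D`, of the coordinate projections of the generators. -/
theorem diagonal_semicontinuous_complete_iff_eigenspace_complete
    (lam : ℕ → ℝ) (hlam : ∃ M : ℝ, ∀ n : ℕ, |lam n| ≤ M)
    (L : ℝ) (hL : 0 < L)
    {I : Type*} [Countable I] (g : I → lp (fun _ : ℕ => ℂ) 2) :
    (∀ f : lp (fun _ : ℕ => ℂ) 2,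
        (∀ (i : I) (t : ℝ), t ∈ Set.Icc (0 : ℝ) L →
          ∑' n : ℕ, (starRingEnd ℂ) (f n) * ((lam n : ℂ) ^ (t : ℂ)) * g i n = 0) → f = 0)
      ↔
    (∀ (v : ℝ) (f : lp (fun _ : ℕ => ℂ) 2), (∀ n : ℕ, lam n ≠ v → f n = 0) →
        (∀ i : I, ∑' n : ℕ, (starRingEnd ℂ) (f n) * g i n = 0) → f = 0) :=
  diagonal_semicontinuous_complete_iff_eigenspace_complete_general lam hlam L hL g
end

section
/- Let H be a complex Hilbert space and A a bounded normal operator on H whose spectrum contains no negative real number. Let I be a countable index set, let g : I → H be a Bessel family (there exists C_G > 0 with ∑_{i∈I} |⟨f, g_i⟩|² ≤ C_G‖f‖² for all f ∈ H), and let L > 0. Then the system {A^t g_i : i ∈ I, t ∈ [0, L]} is Bessel: there exists C > 0 such that ∑_{i∈I} ∫₀ᴸ |⟨f, A^t g_i⟩|² dt ≤ C‖f‖² for all f ∈ H. -/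
/-!
For `0 < t ≤ L` the operators `A ^ t` are uniformly bounded, `‖A ^ t‖ ≤ ‖A‖ ^ t ≤ max 1 ‖A‖ ^ L`,
so the Bessel bound applied to `(A ^ t)† f` gives `∑ᵢ |⟪f, A ^ t gᵢ⟫|² ≤ C_G M² ‖f‖²` for every
such `t`. Integrating over `(0, L]` and exchanging sum and integral (Tonelli) gives the claim.
Measurability in `t` comes from continuity of `t ↦ A ^ t` on `(0, ∞)`: on the compact spectrum,
`z ^ s → z ^ t` uniformly as `s → t`.
-/

open scoped InnerProductSpace
open MeasureTheory Set Filter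

theorem tsum_integral_le_of_ae_tsum_le {α I : Type*} [MeasurableSpace α] {μ : Measure α}
    [IsFiniteMeasure μ] [Countable I] {F : I → α → ℝ} {B : ℝ} (hB : 0 ≤ B)
    (hF : ∀ i, Integrable (F i) μ) (hF0 : ∀ i, 0 ≤ᵐ[μ] F i)
    (hbound : ∀ᵐ t ∂μ, ∑' i, F i t ≤ B) :
    ∑' i, ∫ t, F i t ∂μ ≤ B * μ.real univ := by
  by_cases hs : Summable fun i => ∫ t, F i t ∂μ
  swap
  · rw [tsum_eq_zero_of_not_summable hs]
    positivity
  have hmeas : ∀ i, AEMeasurable (fun t => ENNReal.ofReal (F i t)) μ :=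
    fun i => (hF i).aemeasurable.ennreal_ofReal
  have htonelli : ENNReal.ofReal (∑' i, ∫ t, F i t ∂μ) =
      ∫⁻ t, ∑' i, ENNReal.ofReal (F i t) ∂μ := by
    rw [ENNReal.ofReal_tsum_of_nonneg (fun i => integral_nonneg_of_ae (hF0 i)) hs,
      lintegral_tsum hmeas]
    exact tsum_congr fun i => ofReal_integral_eq_lintegral_ofReal (hF i) (hF0 i)
  -- `hbound` only carries information where the pointwise sum is summable, hence this step.
  have hfinite : ∀ᵐ t ∂μ, ∑' i, ENNReal.ofReal (F i t) < ⊤ :=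
    ae_lt_top' (AEMeasurable.tsum hmeas) (htonelli ▸ ENNReal.ofReal_ne_top)
  have hpointwise : ∀ᵐ t ∂μ, ∑' i, ENNReal.ofReal (F i t) ≤ ENNReal.ofReal B := by
    filter_upwards [hfinite, hbound, ae_all_iff.2 hF0] with t hfin hbd hnonneg
    have hsum : Summable fun i => F i t := by
      simpa only [ENNReal.toReal_ofReal (hnonneg _)] using ENNReal.summable_toReal hfin.ne
    rw [← ENNReal.ofReal_tsum_of_nonneg hnonneg hsum]
    exact ENNReal.ofReal_le_ofReal hbd
  rw [← ENNReal.ofReal_le_ofReal_iff (by positivity), htonelli, ENNReal.ofReal_mul hB,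
    ofReal_measureReal, ← lintegral_const]
  exact lintegral_mono_ae hpointwise

section InnerProductSpace

variable {E F : Type*} [NormedAddCommGroup E] [InnerProductSpace ℂ E]
  [NormedAddCommGroup F] [InnerProductSpace ℂ F]

theorem tsum_norm_inner_apply_sq_le [CompleteSpace E] [CompleteSpace F] {I : Type*}
    {g : I → E} {CG : ℝ} (hCG : 0 ≤ CG)
    (hbessel : ∀ f : E, ∑' i, ‖⟪f, g i⟫_ℂ‖ ^ 2 ≤ CG * ‖f‖ ^ 2) (T : E →L[ℂ] F) (f : F) :
    ∑' i, ‖⟪f, T (g i)⟫_ℂ‖ ^ 2 ≤ CG * ‖T‖ ^ 2 * ‖f‖ ^ 2 := by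
  have hadj : ‖ContinuousLinearMap.adjoint T f‖ ≤ ‖T‖ * ‖f‖ := by
    simpa only [LinearIsometryEquiv.norm_map] using (ContinuousLinearMap.adjoint T).le_opNorm f
  calc ∑' i, ‖⟪f, T (g i)⟫_ℂ‖ ^ 2 = ∑' i, ‖⟪ContinuousLinearMap.adjoint T f, g i⟫_ℂ‖ ^ 2 := by
        simp only [ContinuousLinearMap.adjoint_inner_left]
    _ ≤ CG * ‖ContinuousLinearMap.adjoint T f‖ ^ 2 := hbessel _
    _ ≤ CG * (‖T‖ * ‖f‖) ^ 2 := by gcongr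
    _ = CG * ‖T‖ ^ 2 * ‖f‖ ^ 2 := by ring

theorem integrableOn_norm_inner_apply_sq {α : Type*} [MeasurableSpace α] {μ : Measure α}
    {s : Set α} (hs : μ s < ⊤) {T : α → E →L[ℂ] F} (hT : AEStronglyMeasurable T (μ.restrict s))
    {M : ℝ} (hM : ∀ᵐ t ∂μ.restrict s, ‖T t‖ ≤ M) (f : F) (x : E) :
    IntegrableOn (fun t => ‖⟪f, T t x⟫_ℂ‖ ^ 2) s μ := by
  have hTx : AEStronglyMeasurable (fun t => T t x) (μ.restrict s) :=
    (ContinuousLinearMap.apply ℂ F x).continuous.comp_aestronglyMeasurable hT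
  refine IntegrableOn.of_bound hs ((aestronglyMeasurable_const.inner hTx).norm.pow 2)
    ((M * ‖f‖ * ‖x‖) ^ 2) (hM.mono fun t ht => ?_)
  rw [Real.norm_of_nonneg (by positivity)]
  gcongr
  calc ‖⟪f, T t x⟫_ℂ‖ ≤ ‖f‖ * ‖T t x‖ := norm_inner_le_norm _ _
    _ ≤ ‖f‖ * (M * ‖x‖) := by grw [ContinuousLinearMap.le_opNorm, ht]
    _ = M * ‖f‖ * ‖x‖ := by ring

end InnerProductSpace

section CPow

variable {A : Type*} [CStarAlgebra A]

theorem norm_cfc_cpow_le (a : A) {t : ℝ} (ht : 0 < t) :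
    ‖cfc (fun z : ℂ => z ^ (t : ℂ)) a‖ ≤ ‖a‖ ^ t := by
  refine norm_cfc_le (by positivity) fun z hz => ?_
  obtain _ | _ := subsingleton_or_nontrivial A
  · simp [spectrum.of_subsingleton] at hz
  rcases eq_or_ne z 0 with rfl | hz0
  · rw [Complex.zero_cpow (by exact_mod_cast ht.ne'), norm_zero]
    positivity
  · rw [Complex.norm_cpow_of_ne_zero hz0]
    simp only [Complex.ofReal_re, Complex.ofReal_im, mul_zero, Real.exp_zero, div_one]
    exact Real.rpow_le_rpow (norm_nonneg z) (spectrum.norm_le_norm_of_mem hz) ht.le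

theorem norm_cfc_cpow_le_max_one_rpow (a : A) {t L : ℝ} (ht : t ∈ Ioc 0 L) :
    ‖cfc (fun z : ℂ => z ^ (t : ℂ)) a‖ ≤ max 1 ‖a‖ ^ L :=
  calc ‖cfc (fun z : ℂ => z ^ (t : ℂ)) a‖ ≤ ‖a‖ ^ t := norm_cfc_cpow_le a ht.1
    _ ≤ max 1 ‖a‖ ^ t := Real.rpow_le_rpow (norm_nonneg _) (le_max_right _ _) ht.1.le
    _ ≤ max 1 ‖a‖ ^ L := Real.rpow_le_rpow_of_exponent_le (le_max_left _ _) ht.2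

theorem continuousOn_cfc_cpow (a : A) (ha : ∀ z ∈ spectrum ℂ a, 0 ≤ z.re ∨ z.im ≠ 0) :
    ContinuousOn (fun t : ℝ => cfc (fun z : ℂ => z ^ (t : ℂ)) a) (Ioi 0) := by
  have hjoint : ContinuousOn (fun p : ℝ × ℂ => p.2 ^ (p.1 : ℂ)) (Ioi 0 ×ˢ spectrum ℂ a) :=
    fun p hp => ((Complex.continuousAt_cpow_of_re_pos (p := (p.2, (p.1 : ℂ))) (ha _ hp.2)
      (by simpa using hp.1)).comp (f := fun p : ℝ × ℂ => (p.2, (p.1 : ℂ)))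
        (by fun_prop)).continuousWithinAt
  intro t ht
  refine continuousWithinAt_cfc_fun ?_ (eventually_nhdsWithin_of_forall fun s hs =>
    hjoint.comp (f := fun z : ℂ => (s, z)) (by fun_prop) fun z hz => ⟨hs, hz⟩)
  refine Metric.tendstoUniformlyOn_iff.2 fun ε hε => ?_
  obtain ⟨v, hv, hvε⟩ := (spectrum.isCompact a).mem_uniformity_of_prod
    (f := fun (s : ℝ) (z : ℂ) => z ^ (s : ℂ)) hjoint ht (Metric.dist_mem_uniformity hε)
  exact mem_of_superset hv fun s hs z hz => by simpa [dist_comm] using hvε s hs z hz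

end CPow

theorem semicontinuous_system_bessel_of_bessel_general
    {H : Type*} [NormedAddCommGroup H] [InnerProductSpace ℂ H] [CompleteSpace H]
    (A : H →L[ℂ] H)
    (hspec : ∀ z ∈ spectrum ℂ A, 0 ≤ z.re ∨ z.im ≠ 0)
    {I : Type*} [Countable I] (g : I → H)
    (CG : ℝ) (hCG : 0 < CG)
    (hbessel : ∀ f : H, ∑' i : I, ‖⟪f, g i⟫_ℂ‖ ^ 2 ≤ CG * ‖f‖ ^ 2)
    (L : ℝ) (hL : 0 < L) :
    ∃ C : ℝ, 0 < C ∧ ∀ f : H,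
      ∑' i : I, ∫ t in (0 : ℝ)..L, ‖⟪f, (cfc (fun z : ℂ => z ^ (t : ℂ)) A) (g i)⟫_ℂ‖ ^ 2
        ≤ C * ‖f‖ ^ 2 := by
  set M := max 1 ‖A‖ ^ L
  have hnorm : ∀ᵐ t : ℝ ∂volume.restrict (Ioc 0 L), ‖cfc (fun z : ℂ => z ^ (t : ℂ)) A‖ ≤ M :=
    ae_restrict_of_forall_mem measurableSet_Ioc fun t ht => norm_cfc_cpow_le_max_one_rpow A ht
  have hmeas : AEStronglyMeasurable (fun t : ℝ => cfc (fun z : ℂ => z ^ (t : ℂ)) A)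
      (volume.restrict (Ioc 0 L)) :=
    ((continuousOn_cfc_cpow A hspec).mono Ioc_subset_Ioi_self).aestronglyMeasurable
      measurableSet_Ioc
  refine ⟨CG * M ^ 2 * L, by positivity, fun f => ?_⟩
  simp_rw [intervalIntegral.integral_of_le hL.le]
  calc _ ≤ CG * M ^ 2 * ‖f‖ ^ 2 * (volume.restrict (Ioc 0 L)).real univ :=
        tsum_integral_le_of_ae_tsum_le (by positivity)
          (fun i => integrableOn_norm_inner_apply_sq measure_Ioc_lt_top hmeas hnorm f (g i))
          (fun i => .of_forall fun t => by positivity)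
          (hnorm.mono fun t ht => (tsum_norm_inner_apply_sq_le hCG.le hbessel _ f).trans
            (by gcongr))
    _ = CG * M ^ 2 * L * ‖f‖ ^ 2 := by
      rw [measureReal_restrict_apply_univ, Real.volume_real_Ioc_of_le hL.le]
      ring

/-- If `A` is a bounded normal operator whose spectrum contains no negative real number and
`(gᵢ)` is a Bessel family, then the semi-continuous system `{A^t gᵢ : i ∈ I, t ∈ [0,L]}`
is Bessel. -/
theorem semicontinuous_system_bessel_of_bessel
    {H : Type*} [NormedAddCommGroup H] [InnerProductSpace ℂ H] [CompleteSpace H]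
    (A : H →L[ℂ] H) (hA : IsStarNormal A)
    (hspec : ∀ z ∈ spectrum ℂ A, 0 ≤ z.re ∨ z.im ≠ 0)
    {I : Type*} [Countable I] (g : I → H)
    (CG : ℝ) (hCG : 0 < CG)
    (hbessel : ∀ f : H, ∑' i : I, ‖⟪f, g i⟫_ℂ‖ ^ 2 ≤ CG * ‖f‖ ^ 2)
    (L : ℝ) (hL : 0 < L) :
    ∃ C : ℝ, 0 < C ∧ ∀ f : H,
      ∑' i : I, ∫ t in (0 : ℝ)..L, ‖⟪f, (cfc (fun z : ℂ => z ^ (t : ℂ)) A) (g i)⟫_ℂ‖ ^ 2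
        ≤ C * ‖f‖ ^ 2 :=
  semicontinuous_system_bessel_of_bessel_general A hspec g CG hCG hbessel L hL
end

section
/- Let ℓ be a real number with 0 < ℓ ≤ 1/2 and let 0 < r ≤ R < ∞. Then there exist constants 0 < m ≤ M such that for every z ∈ ℂ with r ≤ |z| ≤ R, m ≤ |∫₀^ℓ z^t dt| ≤ M, where the integral is over t ∈ [0, ℓ] ⊂ ℝ and z^t is the principal complex power. (Equivalently, the function φ with φ(z) = (z^ℓ − 1)/log z for z ∉ {0, 1} and φ(1) = ℓ is bounded above and bounded away from zero on the annulus {z : r ≤ |z| ≤ R}.) -/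
/-!
For `t ∈ [0, ℓ] ⊆ [0, 1/2]` the argument `t · arg z` of `z ^ t` has absolute value at most
`π t ≤ π / 2`, so `Re (z ^ t) = ‖z‖ ^ t cos (t arg z) ≥ min 1 ‖z‖ · cos (π t) ≥ 0`. Integrating,
`Re ∫₀^ℓ z ^ t dt ≥ min 1 ‖z‖ · sin (π ℓ) / π > 0`, while `‖z ^ t‖ = ‖z‖ ^ t ≤ max 1 ‖z‖` gives
the upper bound `max 1 ‖z‖ · ℓ`.
-/

open Real intervalIntegral

namespace Real

lemma min_one_le_rpow {x t : ℝ} (hx : 0 < x) (ht0 : 0 ≤ t) (ht1 : t ≤ 1) : min 1 x ≤ x ^ t := by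
  rcases le_or_gt 1 x with h | h
  · exact (min_le_left _ _).trans (one_le_rpow h ht0)
  · calc min 1 x ≤ x := min_le_right _ _
      _ = x ^ (1 : ℝ) := (rpow_one x).symm
      _ ≤ x ^ t := rpow_le_rpow_of_exponent_ge hx h.le ht1

lemma rpow_le_max_one {x t : ℝ} (hx : 0 ≤ x) (ht0 : 0 ≤ t) (ht1 : t ≤ 1) : x ^ t ≤ max 1 x := by
  rcases le_or_gt 1 x with h | h
  · calc x ^ t ≤ x ^ (1 : ℝ) := rpow_le_rpow_of_exponent_le h ht1
      _ = x := rpow_one x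
      _ ≤ max 1 x := le_max_right _ _
  · exact (rpow_le_one hx h.le ht0).trans (le_max_left _ _)

lemma cos_pi_mul_le_cos_mul {θ t : ℝ} (hθ : |θ| ≤ π) (ht0 : 0 ≤ t) (ht1 : t ≤ 1) :
    cos (π * t) ≤ cos (θ * t) := by
  rw [← cos_abs (θ * t), abs_mul, abs_of_nonneg ht0]
  exact cos_le_cos_of_nonneg_of_le_pi (by positivity) (by nlinarith [pi_pos])
    (mul_le_mul_of_nonneg_right hθ ht0)

lemma integral_cos_pi_mul (ℓ : ℝ) : ∫ t in (0 : ℝ)..ℓ, cos (π * t) = sin (π * ℓ) / π := by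
  simp [integral_comp_mul_left, pi_ne_zero, div_eq_inv_mul]

end Real

namespace Complex

lemma continuous_cpow_ofReal {z : ℂ} (hz : z ≠ 0) : Continuous fun t : ℝ => z ^ (t : ℂ) :=
  continuous_ofReal.const_cpow (Or.inl hz)

lemma norm_cpow_ofReal_le_max_one (z : ℂ) {t : ℝ} (ht0 : 0 ≤ t) (ht1 : t ≤ 1) :
    ‖z ^ (t : ℂ)‖ ≤ max 1 ‖z‖ := by
  rw [norm_cpow_real]
  exact rpow_le_max_one (norm_nonneg z) ht0 ht1

lemma min_one_mul_cos_pi_mul_le_re_cpow {z : ℂ} (hz : z ≠ 0) {t : ℝ} (ht0 : 0 ≤ t)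
    (ht : t ≤ 1 / 2) : min 1 ‖z‖ * Real.cos (π * t) ≤ (z ^ (t : ℂ)).re := by
  have hcos : 0 ≤ Real.cos (π * t) :=
    cos_nonneg_of_mem_Icc ⟨by nlinarith [pi_pos], by nlinarith [pi_pos]⟩
  rw [cpow_ofReal_re]
  exact mul_le_mul (min_one_le_rpow (norm_pos_iff.mpr hz) ht0 (by linarith))
    (cos_pi_mul_le_cos_mul (abs_arg_le_pi z) ht0 (by linarith)) hcos (by positivity)

lemma min_one_mul_sin_div_pi_le_re_integral_cpow {z : ℂ} (hz : z ≠ 0) {ℓ : ℝ} (hℓ0 : 0 ≤ ℓ)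
    (hℓ : ℓ ≤ 1 / 2) :
    min 1 ‖z‖ * (Real.sin (π * ℓ) / π) ≤ (∫ t in (0 : ℝ)..ℓ, z ^ (t : ℂ)).re := by
  have hcont := continuous_cpow_ofReal hz
  have hre : (∫ t in (0 : ℝ)..ℓ, z ^ (t : ℂ)).re = ∫ t in (0 : ℝ)..ℓ, (z ^ (t : ℂ)).re :=
    (reCLM.intervalIntegral_comp_comm (hcont.intervalIntegrable 0 ℓ)).symm
  rw [← integral_cos_pi_mul, ← integral_const_mul, hre]
  have hlow : Continuous fun t : ℝ => min 1 ‖z‖ * Real.cos (π * t) := by fun_prop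
  refine integral_mono_on hℓ0 (hlow.intervalIntegrable 0 ℓ)
    ((continuous_re.comp hcont).intervalIntegrable 0 ℓ) fun t ht => ?_
  exact min_one_mul_cos_pi_mul_le_re_cpow hz ht.1 (ht.2.trans hℓ)

lemma norm_integral_cpow_le (z : ℂ) {ℓ : ℝ} (hℓ0 : 0 ≤ ℓ) (hℓ1 : ℓ ≤ 1) :
    ‖∫ t in (0 : ℝ)..ℓ, z ^ (t : ℂ)‖ ≤ max 1 ‖z‖ * ℓ := by
  have := norm_integral_le_of_norm_le_const (a := 0) (b := ℓ) (f := fun t : ℝ => z ^ (t : ℂ))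
    fun t ht => by
      rw [Set.uIoc_of_le hℓ0] at ht
      exact norm_cpow_ofReal_le_max_one z ht.1.le (ht.2.trans hℓ1)
  rwa [sub_zero, abs_of_nonneg hℓ0] at this

end Complex

theorem integral_cpow_bounded_on_annulus_general
    (ℓ : ℝ) (hℓ0 : 0 < ℓ) (hℓ : ℓ ≤ 1 / 2) (r R : ℝ) (hr : 0 < r) :
    ∃ m M : ℝ, 0 < m ∧ m ≤ M ∧ ∀ z : ℂ, r ≤ ‖z‖ → ‖z‖ ≤ R →
      m ≤ ‖∫ t in (0 : ℝ)..ℓ, z ^ (t : ℂ)‖ ∧ ‖∫ t in (0 : ℝ)..ℓ, z ^ (t : ℂ)‖ ≤ M := by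
  have hsin : 0 < sin (π * ℓ) / π :=
    div_pos (sin_pos_of_pos_of_lt_pi (by positivity) (by nlinarith [pi_pos])) pi_pos
  have hsin_le : sin (π * ℓ) / π ≤ ℓ :=
    (div_le_iff₀ pi_pos).mpr ((sin_le (by positivity)).trans_eq (mul_comm _ _))
  refine ⟨min 1 r * (sin (π * ℓ) / π), max 1 R * ℓ, by positivity, ?_, fun z hzr hzR => ⟨?_, ?_⟩⟩
  · exact mul_le_mul ((min_le_left _ _).trans (le_max_left _ _)) hsin_le hsin.le (by positivity)
  · calc min 1 r * (sin (π * ℓ) / π) ≤ min 1 ‖z‖ * (sin (π * ℓ) / π) := by gcongr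
      _ ≤ (∫ t in (0 : ℝ)..ℓ, z ^ (t : ℂ)).re :=
        Complex.min_one_mul_sin_div_pi_le_re_integral_cpow
          (norm_pos_iff.mp (hr.trans_le hzr)) hℓ0.le hℓ
      _ ≤ ‖∫ t in (0 : ℝ)..ℓ, z ^ (t : ℂ)‖ := Complex.re_le_norm _
  · calc ‖∫ t in (0 : ℝ)..ℓ, z ^ (t : ℂ)‖ ≤ max 1 ‖z‖ * ℓ :=
        Complex.norm_integral_cpow_le z hℓ0.le (by linarith)
      _ ≤ max 1 R * ℓ := by gcongr

/-- The function `z ↦ ∫₀^ℓ z^t dt` is bounded above and bounded away from zero on any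
annulus `{z : r ≤ |z| ≤ R}`, provided `0 < ℓ ≤ 1/2`. -/
theorem integral_cpow_bounded_on_annulus
    (ℓ : ℝ) (hℓ0 : 0 < ℓ) (hℓ : ℓ ≤ 1 / 2) (r R : ℝ) (hr : 0 < r) (hrR : r ≤ R) :
    ∃ m M : ℝ, 0 < m ∧ m ≤ M ∧ ∀ z : ℂ, r ≤ ‖z‖ → ‖z‖ ≤ R →
      m ≤ ‖∫ t in (0 : ℝ)..ℓ, z ^ (t : ℂ)‖ ∧ ‖∫ t in (0 : ℝ)..ℓ, z ^ (t : ℂ)‖ ≤ M :=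
  integral_cpow_bounded_on_annulus_general ℓ hℓ0 hℓ r R hr
end

section
/- Let H be a complex Hilbert space and A a bounded normal operator on H that is invertible in the algebra of bounded operators and whose spectrum contains no negative real number. Let L > 0 be finite, let I be a countable index set, and let g : I → H satisfy the lower frame inequality: there exists c > 0 such that ∑_{i∈I} |⟨f, g_i⟩|² ≥ c‖f‖² for all f ∈ H. Then there exists a constant C > 0 such that ∑_{i∈I} ∫₀ᴸ |⟨f, A^t g_i⟩|² dt ≥ C‖f‖² for all f ∈ H. -/
/-!
`A^t * A^(-t) = 1` and `t ↦ A^t` is norm-continuous, so `‖A^t‖, ‖A^(-t)‖ ≤ M` uniformly on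
`[0, L]`. As `⟪f, A^t gᵢ⟫ = ⟪(A^t)† f, gᵢ⟫` and `‖f‖ ≤ M ‖(A^t)† f‖`, each family `(A^t gᵢ)ᵢ`
has lower frame bound `c / M²`, and integrating over `[0, L]` gives `C = c L / M²`. Exchanging
the sum and the integral needs convergence, which comes from an upper frame bound: a positive
lower frame bound makes the analysis operator `H → ℓ²(I)` everywhere defined, hence bounded by
the closed graph theorem.
-/

open scoped InnerProductSpace ENNReal
open Filter Topology Complex MeasureTheory Set

section Frame

variable {𝕜 H I : Type*} [RCLike 𝕜] [NormedAddCommGroup H] [InnerProductSpace 𝕜 H]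

variable (𝕜) in
def HasLowerFrameBound (g : I → H) (c : ℝ) : Prop :=
  ∀ h : H, c * ‖h‖ ^ 2 ≤ ∑' i, ‖⟪h, g i⟫_𝕜‖ ^ 2

variable (𝕜) in
def HasUpperFrameBound (g : I → H) (B : ℝ) : Prop :=
  ∀ h : H, ∑' i, ‖⟪h, g i⟫_𝕜‖ ^ 2 ≤ B * ‖h‖ ^ 2

variable {g : I → H}

/-- A positive lower bound rules out the junk value `0` of a divergent `tsum`. -/
theorem HasLowerFrameBound.summable {c : ℝ} (hlow : HasLowerFrameBound 𝕜 g c) (hc : 0 < c)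
    (h : H) : Summable fun i => ‖⟪h, g i⟫_𝕜‖ ^ 2 := by
  by_contra hns
  have : h = 0 := by
    by_contra hne
    have := hlow h
    rw [tsum_eq_zero_of_not_summable hns] at this
    linarith [mul_pos hc (pow_pos (norm_pos_iff.mpr hne) 2)]
  simp [this] at hns

theorem memℓp_two_inner (hsum : ∀ h : H, Summable fun i => ‖⟪h, g i⟫_𝕜‖ ^ 2) (h : H) :
    Memℓp (fun i => ⟪g i, h⟫_𝕜) 2 :=
  memℓp_gen <| by simpa [norm_inner_symm] using hsum h

variable (𝕜 g) in
noncomputable def analysisₗ (hsum : ∀ h : H, Summable fun i => ‖⟪h, g i⟫_𝕜‖ ^ 2) :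
    H →ₗ[𝕜] lp (fun _ : I => 𝕜) 2 where
  toFun h := ⟨_, memℓp_two_inner hsum h⟩
  map_add' x y := by ext i; exact inner_add_right _ _ _
  map_smul' a x := by ext i; exact inner_smul_right _ _ _

theorem norm_analysisₗ_sq (hsum : ∀ h : H, Summable fun i => ‖⟪h, g i⟫_𝕜‖ ^ 2) (h : H) :
    ‖analysisₗ 𝕜 g hsum h‖ ^ 2 = ∑' i, ‖⟪h, g i⟫_𝕜‖ ^ 2 := by
  have := lp.norm_rpow_eq_tsum (p := 2) (by norm_num) (analysisₗ 𝕜 g hsum h)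
  simp only [ENNReal.toReal_ofNat, Real.rpow_two] at this
  rw [this]
  exact tsum_congr fun i => congrArg (· ^ 2) (norm_inner_symm (g i) h)

theorem continuous_analysisₗ [CompleteSpace H]
    (hsum : ∀ h : H, Summable fun i => ‖⟪h, g i⟫_𝕜‖ ^ 2) : Continuous (analysisₗ 𝕜 g hsum) := by
  refine (analysisₗ 𝕜 g hsum).continuous_of_seq_closed_graph fun u x y hux huy => ?_
  ext i
  have hi : Tendsto (fun n => ⟪g i, u n⟫_𝕜) atTop (𝓝 (y i)) :=
    ((lp.evalCLM 𝕜 (fun _ : I => 𝕜) 2 i).continuous.tendsto y).comp huy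
  exact tendsto_nhds_unique hi ((continuous_const.inner continuous_id).tendsto x |>.comp hux)

theorem exists_hasUpperFrameBound_of_summable [CompleteSpace H]
    (hsum : ∀ h : H, Summable fun i => ‖⟪h, g i⟫_𝕜‖ ^ 2) :
    ∃ B : ℝ, 0 ≤ B ∧ HasUpperFrameBound 𝕜 g B := by
  let T : H →L[𝕜] lp (fun _ : I => 𝕜) 2 := ⟨analysisₗ 𝕜 g hsum, continuous_analysisₗ hsum⟩
  refine ⟨‖T‖ ^ 2, sq_nonneg _, fun h => ?_⟩
  rw [← norm_analysisₗ_sq hsum, ← mul_pow]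
  exact pow_le_pow_left₀ (norm_nonneg _) (T.le_opNorm h) 2

variable [CompleteSpace H]

open ContinuousLinearMap

theorem summable_norm_inner_apply_sq (hsum : ∀ h : H, Summable fun i => ‖⟪h, g i⟫_𝕜‖ ^ 2)
    (T : H →L[𝕜] H) (f : H) : Summable fun i => ‖⟪f, T (g i)⟫_𝕜‖ ^ 2 := by
  simpa only [adjoint_inner_left] using hsum (adjoint T f)

theorem norm_le_mul_norm_adjoint_apply {T S : H →L[𝕜] H} (hTS : T * S = 1) (f : H) :
    ‖f‖ ≤ ‖S‖ * ‖adjoint T f‖ := by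
  have hf : adjoint S (adjoint T f) = f := by
    rw [← comp_apply, ← adjoint_comp, ← mul_def, hTS, one_def, adjoint_id, id_apply]
  calc ‖f‖ = ‖adjoint S (adjoint T f)‖ := by rw [hf]
    _ ≤ ‖S‖ * ‖adjoint T f‖ := by
      rw [← LinearIsometryEquiv.norm_map adjoint S]
      exact le_opNorm _ _

theorem HasLowerFrameBound.apply_of_mul_eq_one {c M : ℝ} (hlow : HasLowerFrameBound 𝕜 g c)
    (hc : 0 ≤ c) (hM : 0 < M) {T S : H →L[𝕜] H} (hTS : T * S = 1) (hS : ‖S‖ ≤ M) :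
    HasLowerFrameBound 𝕜 (fun i => T (g i)) (c / M ^ 2) := by
  intro f
  have hf : ‖f‖ ^ 2 ≤ M ^ 2 * ‖adjoint T f‖ ^ 2 := by
    rw [← mul_pow]
    exact pow_le_pow_left₀ (norm_nonneg f)
      ((norm_le_mul_norm_adjoint_apply hTS f).trans (by gcongr)) 2
  calc c / M ^ 2 * ‖f‖ ^ 2 ≤ c / M ^ 2 * (M ^ 2 * ‖adjoint T f‖ ^ 2) := by gcongr
    _ = c * ‖adjoint T f‖ ^ 2 := by field_simp
    _ ≤ ∑' i, ‖⟪f, T (g i)⟫_𝕜‖ ^ 2 := by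
        simpa only [adjoint_inner_left] using hlow (adjoint T f)

theorem HasUpperFrameBound.apply {B M : ℝ} (hup : HasUpperFrameBound 𝕜 g B) (hB : 0 ≤ B)
    {T : H →L[𝕜] H} (hT : ‖T‖ ≤ M) : HasUpperFrameBound 𝕜 (fun i => T (g i)) (B * M ^ 2) := by
  intro f
  have hf : ‖adjoint T f‖ ^ 2 ≤ M ^ 2 * ‖f‖ ^ 2 := by
    rw [← mul_pow]
    refine pow_le_pow_left₀ (norm_nonneg _) ((le_opNorm _ f).trans ?_) 2
    rw [LinearIsometryEquiv.norm_map]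
    gcongr
  calc ∑' i, ‖⟪f, T (g i)⟫_𝕜‖ ^ 2 ≤ B * ‖adjoint T f‖ ^ 2 := by
        simpa only [adjoint_inner_left] using hup (adjoint T f)
    _ ≤ B * M ^ 2 * ‖f‖ ^ 2 := by rw [mul_assoc]; gcongr

end Frame

theorem spectrum_subset_slitPlane_of_isUnit {A : Type*} [Ring A] [Algebra ℂ A] {a : A}
    (ha : IsUnit a) (hspec : ∀ z ∈ spectrum ℂ a, 0 ≤ z.re ∨ z.im ≠ 0) :
    spectrum ℂ a ⊆ slitPlane := by
  intro z hz
  have hz0 : z ≠ 0 := by rintro rfl; exact (spectrum.zero_notMem_iff ℂ).mpr ha hz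
  rw [mem_slitPlane_iff]
  rcases hspec z hz with hre | him
  · by_contra! h
    exact hz0 (Complex.ext (le_antisymm h.1 hre) h.2)
  · exact Or.inr him

section CFC

variable {A : Type*} {p : A → Prop} [Ring A] [StarRing A] [TopologicalSpace A] [Algebra ℂ A]
  [ContinuousFunctionalCalculus ℂ A p]

theorem continuous_cfc_cpow {a : A} (ha : spectrum ℂ a ⊆ slitPlane) :
    Continuous fun t : ℝ => cfc (fun z : ℂ => z ^ (t : ℂ)) a := by
  have : CompactSpace (spectrum ℂ a) :=
    isCompact_iff_compactSpace.mp (ContinuousFunctionalCalculus.isCompact_spectrum (p := p) a)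
  have hjoint : Continuous fun q : ℝ × spectrum ℂ a => (q.2 : ℂ) ^ (q.1 : ℂ) :=
    (continuous_subtype_val.comp continuous_snd).cpow (continuous_ofReal.comp continuous_fst)
      fun q => ha q.2.2
  refine continuous_iff_continuousAt.mpr fun t => continuousAt_cfc_fun ?_ ?_
  · exact tendstoUniformlyOn_iff_tendstoUniformly_comp_coe.mpr (hjoint.tendstoUniformly _ t)
  · exact Eventually.of_forall fun s z hz => (continuousAt_cpow_const (ha hz)).continuousWithinAt

theorem cfc_cpow_mul_cfc_cpow_neg {a : A} (ha : spectrum ℂ a ⊆ slitPlane) (w : ℂ)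
    (hpa : p a := by cfc_tac) :
    cfc (fun z : ℂ => z ^ w) a * cfc (fun z : ℂ => z ^ (-w)) a = 1 := by
  have hcont (v : ℂ) : ContinuousOn (fun z : ℂ => z ^ v) (spectrum ℂ a) :=
    fun z hz => (continuousAt_cpow_const (ha hz)).continuousWithinAt
  rw [← cfc_mul _ _ a (hcont w) (hcont (-w)), ← cfc_one ℂ a]
  refine cfc_congr fun z hz => ?_
  rw [← cpow_add _ _ (slitPlane_ne_zero (ha hz)), add_neg_cancel, cpow_zero, Pi.one_apply]

end CFC

theorem mul_measureReal_univ_le_tsum_integral {α I : Type*} [Countable I] [MeasurableSpace α]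
    {μ : Measure α} [IsFiniteMeasure μ] {F : I → α → ℝ} (hF : ∀ i t, 0 ≤ F i t)
    (hF_meas : ∀ i, AEStronglyMeasurable (F i) μ) (hsum : ∀ t, Summable fun i => F i t)
    {m K : ℝ} (hlow : ∀ᵐ t ∂μ, m ≤ ∑' i, F i t) (hup : ∀ᵐ t ∂μ, ∑' i, F i t ≤ K) :
    m * μ.real univ ≤ ∑' i, ∫ t, F i t ∂μ := by
  have hsum_ofReal (t : α) : ∑' i, ENNReal.ofReal (F i t) = ENNReal.ofReal (∑' i, F i t) :=
    (ENNReal.ofReal_tsum_of_nonneg (hF · t) (hsum t)).symm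
  have hlint :
      ∑' i, ∫⁻ t, ENNReal.ofReal (F i t) ∂μ = ∫⁻ t, ENNReal.ofReal (∑' i, F i t) ∂μ := by
    rw [← lintegral_tsum fun i => (hF_meas i).aemeasurable.ennreal_ofReal]
    simp_rw [hsum_ofReal]
  have hfin : ∫⁻ t, ENNReal.ofReal (∑' i, F i t) ∂μ ≠ ∞ :=
    ne_top_of_le_ne_top (lintegral_const_lt_top (μ := μ) (ENNReal.ofReal_ne_top (r := K))).ne
      (lintegral_mono_ae (hup.mono fun t ht => ENNReal.ofReal_le_ofReal ht))
  have hterm (i : I) : ∫⁻ t, ENNReal.ofReal (F i t) ∂μ ≠ ∞ :=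
    ne_top_of_le_ne_top (hlint ▸ hfin) (ENNReal.le_tsum i)
  calc m * μ.real univ ≤ max m 0 * μ.real univ :=
        mul_le_mul_of_nonneg_right (le_max_left m 0) measureReal_nonneg
    _ = (∫⁻ _, ENNReal.ofReal m ∂μ).toReal := by
        rw [lintegral_const, ENNReal.toReal_mul, ENNReal.toReal_ofReal', measureReal_def]
    _ ≤ (∫⁻ t, ENNReal.ofReal (∑' i, F i t) ∂μ).toReal :=
        ENNReal.toReal_mono hfin
          (lintegral_mono_ae (hlow.mono fun t ht => ENNReal.ofReal_le_ofReal ht))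
    _ = ∑' i, ∫ t, F i t ∂μ := by
        rw [← hlint, ENNReal.tsum_toReal_eq hterm]
        exact tsum_congr fun i => (integral_eq_lintegral_of_nonneg_ae
          (Eventually.of_forall (hF i)) (hF_meas i)).symm

/-- If `A` is an invertible bounded normal operator with no negative real number in its
spectrum and the family `(gᵢ)` satisfies a lower frame inequality, then the semi-continuous
system `{A^t gᵢ : i ∈ I, t ∈ [0,L]}` satisfies a lower frame inequality as well. -/
theorem semicontinuous_lower_frame_bound_of_lower_frame_bound
    {H : Type*} [NormedAddCommGroup H] [InnerProductSpace ℂ H] [CompleteSpace H]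
    (A : H →L[ℂ] H) (hA : IsStarNormal A) (hinv : IsUnit A)
    (hspec : ∀ z ∈ spectrum ℂ A, 0 ≤ z.re ∨ z.im ≠ 0)
    (L : ℝ) (hL : 0 < L)
    {I : Type*} [Countable I] (g : I → H)
    (c : ℝ) (hc : 0 < c)
    (hlow : ∀ f : H, c * ‖f‖ ^ 2 ≤ ∑' i : I, ‖⟪f, g i⟫_ℂ‖ ^ 2) :
    ∃ C : ℝ, 0 < C ∧ ∀ f : H,
      C * ‖f‖ ^ 2 ≤
        ∑' i : I, ∫ t in (0 : ℝ)..L, ‖⟪f, (cfc (fun z : ℂ => z ^ (t : ℂ)) A) (g i)⟫_ℂ‖ ^ 2 := by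
  have hslit := spectrum_subset_slitPlane_of_isUnit hinv hspec
  set P : ℝ → H →L[ℂ] H := fun t => cfc (fun z : ℂ => z ^ (t : ℂ)) A
  have hP : Continuous P := continuous_cfc_cpow hslit
  have hPinv (t : ℝ) : P t * P (-t) = 1 := by
    simpa [P] using cfc_cpow_mul_cfc_cpow_neg hslit (t : ℂ) hA
  obtain ⟨M, hM, hPM⟩ : ∃ M, 0 < M ∧ ∀ t ∈ Icc (-L) L, ‖P t‖ ≤ M := by
    obtain ⟨M₀, hM₀⟩ := isCompact_Icc.exists_bound_of_continuousOn hP.continuousOn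
    exact ⟨max M₀ 1, by positivity, fun t ht => (hM₀ t ht).trans (le_max_left _ _)⟩
  have hPM_Ioc {t : ℝ} (ht : t ∈ Ioc 0 L) : ‖P t‖ ≤ M ∧ ‖P (-t)‖ ≤ M :=
    ⟨hPM t ⟨by linarith [ht.1], ht.2⟩, hPM (-t) ⟨by linarith [ht.2], by linarith [ht.1]⟩⟩
  have hsum := HasLowerFrameBound.summable hlow hc
  obtain ⟨B, hB, hup⟩ := exists_hasUpperFrameBound_of_summable hsum
  refine ⟨c / M ^ 2 * L, by positivity, fun f => ?_⟩
  have hintegral := mul_measureReal_univ_le_tsum_integral (μ := volume.restrict (Ioc 0 L))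
    (F := fun i t => ‖⟪f, P t (g i)⟫_ℂ‖ ^ 2) (m := c / M ^ 2 * ‖f‖ ^ 2)
    (K := B * M ^ 2 * ‖f‖ ^ 2) (fun i t => sq_nonneg _)
    (fun i => by fun_prop)
    (fun t => summable_norm_inner_apply_sq hsum (P t) f)
    (ae_restrict_of_forall_mem measurableSet_Ioc fun t ht =>
      HasLowerFrameBound.apply_of_mul_eq_one hlow hc.le hM (hPinv t) (hPM_Ioc ht).2 f)
    (ae_restrict_of_forall_mem measurableSet_Ioc fun t ht => hup.apply hB (hPM_Ioc ht).1 f)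
  simp_rw [intervalIntegral.integral_of_le hL.le]
  rw [measureReal_restrict_apply_univ, Real.volume_real_Ioc_of_le hL.le, sub_zero] at hintegral
  linarith
end

section
/- Let λ : ℕ → ℝ be a bounded sequence, L > 0, I a countable index set, and g : I → ℓ²(ℕ, ℂ). Suppose there exists C > 0 such that for every f ∈ ℓ²(ℕ, ℂ), ∑_{i∈I} ∫₀ᴸ |∑_{n=0}^∞ conj(f(n))·(λ(n))^t·g_i(n)|² dt ≥ C‖f‖² (a lower semi-continuous frame bound for the system {D^t g_i : i ∈ I, t ∈ [0, L]}). Then ∑_{i∈I} ‖g_i‖² = ∞, i.e., the family (‖g_i‖²)_{i∈I} is not summable. -/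
/-! Testing the lower frame bound on the standard basis vector `eₘ` gives
`⟨eₘ, D^t gᵢ⟩ = λₘ^t gᵢ(m)`, and `|λₘ^t| ≤ max M 1 ^ L` for `t ∈ [0, L]`, so every coordinate
carries a definite amount of energy: `∑ᵢ |gᵢ(m)|² ≥ C / (max M 1 ^ L)² L`. Summing over the
infinitely many `m` and exchanging the order of summation makes `∑ᵢ ‖gᵢ‖²` infinite. -/

open ComplexConjugate

namespace lp

variable {ι : Type*} {E : ι → Type*} [∀ i, NormedAddCommGroup (E i)]

theorem norm_sq_eq_tsum_norm_sq (f : lp E 2) : ‖f‖ ^ 2 = ∑' n, ‖f n‖ ^ 2 := by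
  simpa using norm_rpow_eq_tsum (p := 2) (by norm_num) f

theorem summable_norm_sq (f : lp E 2) : Summable fun n => ‖f n‖ ^ 2 := by
  simpa using (lp.memℓp f).summable (p := 2) (by norm_num)

theorem summable_norm_sq_apply {I : Type*} {g : I → lp E 2}
    (hg : Summable fun i => ‖g i‖ ^ 2) (n : ι) : Summable fun i => ‖g i n‖ ^ 2 :=
  hg.of_nonneg_of_le (fun _ => sq_nonneg _)
    fun _ => pow_le_pow_left₀ (norm_nonneg _) (norm_apply_le_norm two_ne_zero _ n) 2

theorem summable_tsum_norm_sq_apply {I : Type*} (g : I → lp E 2)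
    (hg : Summable fun i => ‖g i‖ ^ 2) : Summable fun n => ∑' i, ‖g i n‖ ^ 2 := by
  have hprod : Summable fun p : I × ι => ‖g p.1 p.2‖ ^ 2 :=
    (summable_prod_of_nonneg fun _ => sq_nonneg _).2
      ⟨fun i => summable_norm_sq (g i), by simpa only [← norm_sq_eq_tsum_norm_sq] using hg⟩
  exact ((summable_prod_of_nonneg fun _ => sq_nonneg _).1 hprod.prod_symm).2

theorem tsum_conj_single_one_mul_mul [DecidableEq ι] (m : ι) (a b : ι → ℂ) :
    ∑' n, conj ((lp.single 2 m 1 : lp (fun _ : ι => ℂ) 2) n) * a n * b n = a m * b m := by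
  rw [tsum_eq_single m fun n hn => by simp [lp.single_apply, hn]]
  simp [lp.single_apply]

end lp

theorem Complex.norm_cpow_real_le {z : ℂ} {M t L : ℝ} (hz : ‖z‖ ≤ M) (ht : t ∈ Set.Icc 0 L) :
    ‖z ^ (t : ℂ)‖ ≤ max M 1 ^ L := by
  rw [norm_cpow_real]
  calc ‖z‖ ^ t ≤ max M 1 ^ t := Real.rpow_le_rpow (norm_nonneg z) (hz.trans (le_max_left _ _)) ht.1
    _ ≤ max M 1 ^ L := Real.rpow_le_rpow_of_exponent_le (le_max_right _ _) ht.2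

noncomputable def diagonalFrameSum {I : Type*} (lam : ℕ → ℝ) (L : ℝ)
    (g : I → lp (fun _ : ℕ => ℂ) 2) (f : lp (fun _ : ℕ => ℂ) 2) : ℝ :=
  ∑' i, ∫ t in (0 : ℝ)..L, ‖∑' n : ℕ, conj (f n) * ((lam n : ℂ) ^ (t : ℂ)) * g i n‖ ^ 2

theorem diagonalFrameSum_single_le {I : Type*} {lam : ℕ → ℝ} {M L : ℝ}
    (hM : ∀ n, |lam n| ≤ M) (hL : 0 ≤ L) (g : I → lp (fun _ : ℕ => ℂ) 2) (m : ℕ)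
    (hm : Summable fun i => ‖g i m‖ ^ 2) :
    diagonalFrameSum lam L g (lp.single 2 m 1) ≤ (max M 1 ^ L) ^ 2 * L * ∑' i, ‖g i m‖ ^ 2 := by
  set B := max M 1 ^ L
  have hterm (i : I) : ∫ t in (0 : ℝ)..L,
      ‖∑' n : ℕ, conj ((lp.single 2 m 1 : lp (fun _ : ℕ => ℂ) 2) n) *
        ((lam n : ℂ) ^ (t : ℂ)) * g i n‖ ^ 2 ≤ B ^ 2 * L * ‖g i m‖ ^ 2 := by
    simp only [lp.tsum_conj_single_one_mul_mul]
    have hbound : ∀ t ∈ Set.uIoc 0 L,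
        ‖‖(lam m : ℂ) ^ (t : ℂ) * g i m‖ ^ 2‖ ≤ B ^ 2 * ‖g i m‖ ^ 2 := by
      intro t ht
      rw [Set.uIoc_of_le hL] at ht
      have hpow : ‖(lam m : ℂ) ^ (t : ℂ)‖ ≤ B :=
        Complex.norm_cpow_real_le (by simpa using hM m) (Set.Ioc_subset_Icc_self ht)
      rw [Real.norm_of_nonneg (sq_nonneg _), norm_mul, mul_pow]
      gcongr
    calc _ ≤ _ := Real.le_norm_self _
      _ ≤ B ^ 2 * ‖g i m‖ ^ 2 * |L - 0| := intervalIntegral.norm_integral_le_of_norm_le_const hbound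
      _ = B ^ 2 * L * ‖g i m‖ ^ 2 := by rw [sub_zero, abs_of_nonneg hL]; ring
  have hsum : Summable fun i => B ^ 2 * L * ‖g i m‖ ^ 2 := hm.mul_left _
  calc diagonalFrameSum lam L g (lp.single 2 m 1) ≤ ∑' i, B ^ 2 * L * ‖g i m‖ ^ 2 :=
        Summable.tsum_le_tsum hterm (hsum.of_nonneg_of_le
          (fun i => intervalIntegral.integral_nonneg hL fun _ _ => sq_nonneg _) hterm) hsum
    _ = B ^ 2 * L * ∑' i, ‖g i m‖ ^ 2 := tsum_mul_left

theorem diagonal_lower_frame_bound_implies_not_summable_general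
    (lam : ℕ → ℝ) (hlam : ∃ M : ℝ, ∀ n : ℕ, |lam n| ≤ M)
    (L : ℝ) (hL : 0 < L)
    {I : Type*} (g : I → lp (fun _ : ℕ => ℂ) 2)
    (C : ℝ) (hC : 0 < C)
    (hlow : ∀ f : lp (fun _ : ℕ => ℂ) 2,
      C * ‖f‖ ^ 2 ≤ ∑' i : I, ∫ t in (0 : ℝ)..L,
        ‖∑' n : ℕ, (starRingEnd ℂ) (f n) * ((lam n : ℂ) ^ (t : ℂ)) * g i n‖ ^ 2) :
    ¬ Summable (fun i : I => ‖g i‖ ^ 2) := by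
  intro hsum
  obtain ⟨M, hM⟩ := hlam
  set B := max M 1 ^ L
  have hcoord (m : ℕ) : C / (B ^ 2 * L) ≤ ∑' i, ‖g i m‖ ^ 2 := by
    rw [div_le_iff₀' (by positivity)]
    calc C = C * ‖(lp.single 2 m 1 : lp (fun _ : ℕ => ℂ) 2)‖ ^ 2 := by
          rw [lp.norm_single (by norm_num), norm_one, one_pow, mul_one]
      _ ≤ diagonalFrameSum lam L g (lp.single 2 m 1) := hlow (lp.single 2 m 1)
      _ ≤ B ^ 2 * L * ∑' i, ‖g i m‖ ^ 2 :=
          diagonalFrameSum_single_le hM hL.le g m (lp.summable_norm_sq_apply hsum m)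
  have hconst : Summable fun _ : ℕ => C / (B ^ 2 * L) :=
    (lp.summable_tsum_norm_sq_apply g hsum).of_nonneg_of_le (fun _ => by positivity) hcoord
  exact (div_pos hC (by positivity)).ne' (summable_const_iff _ |>.1 hconst)

/-- If the semi-continuous system `{D^t gᵢ : i ∈ I, t ∈ [0,L]}` generated by a bounded
diagonal operator `D` (with real diagonal `lam`) on `ℓ²(ℕ, ℂ)` satisfies a lower frame
bound, then `∑ᵢ ‖gᵢ‖² = ∞`. -/
theorem diagonal_lower_frame_bound_implies_not_summable
    (lam : ℕ → ℝ) (hlam : ∃ M : ℝ, ∀ n : ℕ, |lam n| ≤ M)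
    (L : ℝ) (hL : 0 < L)
    {I : Type*} [Countable I] (g : I → lp (fun _ : ℕ => ℂ) 2)
    (C : ℝ) (hC : 0 < C)
    (hlow : ∀ f : lp (fun _ : ℕ => ℂ) 2,
      C * ‖f‖ ^ 2 ≤ ∑' i : I, ∫ t in (0 : ℝ)..L,
        ‖∑' n : ℕ, (starRingEnd ℂ) (f n) * ((lam n : ℂ) ^ (t : ℂ)) * g i n‖ ^ 2) :
    ¬ Summable (fun i : I => ‖g i‖ ^ 2) :=
  diagonal_lower_frame_bound_implies_not_summable_general lam hlam L hL g C hC hlow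
end

section
/- Let λ : ℕ → ℝ be a bounded sequence, L > 0, I a countable index set, and g : I → ℓ²(ℕ, ℂ). If there exists C > 0 such that for every f ∈ ℓ²(ℕ, ℂ), ∑_{i∈I} ∫₀ᴸ |∑_{n=0}^∞ conj(f(n))·(λ(n))^t·g_i(n)|² dt ≥ C‖f‖², then the index set I is infinite. In particular, a semi-continuous frame {D^t g_i : i ∈ I, t ∈ [0, L]} for ℓ²(ℕ, ℂ) requires infinitely many generators. -/
/-!
Test the lower frame bound on the standard basis vector `δₙ`. The inner series collapses to
`(λₙ)ᵗ gᵢ(n)`, and `|λₙ|ᵗ` is bounded uniformly in `n` and `t ∈ [0, L]`, so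
`C ≤ K ∑ᵢ |gᵢ(n)|²` for a constant `K` independent of `n`. If `I` were finite, the right-hand
side would tend to `0` as `n → ∞`, since the entries of each `gᵢ ∈ ℓ²` do.
-/

open Filter Topology

lemma lp.tendsto_norm_sq_atTop_zero {E : ℕ → Type*} [∀ n, NormedAddCommGroup (E n)]
    (f : lp E 2) : Tendsto (fun n => ‖f n‖ ^ 2) atTop (𝓝 0) := by
  have hsum := (lp.memℓp f).summable (p := 2) (by norm_num)
  simpa only [ENNReal.toReal_ofNat, Real.rpow_two] using hsum.tendsto_atTop_zero

lemma tsum_conj_lpSingle_mul_mul (n : ℕ) (a b : ℕ → ℂ) :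
    ∑' m, starRingEnd ℂ (lp.single (E := fun _ : ℕ => ℂ) 2 n 1 m) * a m * b m = a n * b n := by
  rw [tsum_eq_single n fun m hm => by simp [hm]]
  simp

lemma norm_ofReal_cpow_ofReal_le {x M t L : ℝ} (hx : |x| ≤ M) (hM : 1 ≤ M) (ht₀ : 0 ≤ t)
    (htL : t ≤ L) : ‖(x : ℂ) ^ (t : ℂ)‖ ≤ M ^ L := by
  rw [Complex.norm_cpow_real, Complex.norm_real, Real.norm_eq_abs]
  calc |x| ^ t ≤ M ^ t := Real.rpow_le_rpow (abs_nonneg x) hx ht₀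
    _ ≤ M ^ L := Real.rpow_le_rpow_of_exponent_le hM htL

lemma integral_norm_ofReal_cpow_mul_sq_le {x M L : ℝ} (hx : |x| ≤ M) (hM : 1 ≤ M) (hL : 0 ≤ L)
    (c : ℂ) : ∫ t in (0 : ℝ)..L, ‖(x : ℂ) ^ (t : ℂ) * c‖ ^ 2 ≤ L * (M ^ L) ^ 2 * ‖c‖ ^ 2 := by
  have hbound : ∀ t ∈ Set.uIoc 0 L, ‖‖(x : ℂ) ^ (t : ℂ) * c‖ ^ 2‖ ≤ (M ^ L) ^ 2 * ‖c‖ ^ 2 := by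
    intro t ht
    rw [Set.uIoc_of_le hL] at ht
    rw [norm_pow, norm_norm, norm_mul, mul_pow]
    gcongr
    exact norm_ofReal_cpow_ofReal_le hx hM ht.1.le ht.2
  calc _ ≤ ‖∫ t in (0 : ℝ)..L, ‖(x : ℂ) ^ (t : ℂ) * c‖ ^ 2‖ := Real.le_norm_self _
    _ ≤ (M ^ L) ^ 2 * ‖c‖ ^ 2 * |L - 0| := intervalIntegral.norm_integral_le_of_norm_le_const hbound
    _ = L * (M ^ L) ^ 2 * ‖c‖ ^ 2 := by rw [sub_zero, abs_of_nonneg hL]; ring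

lemma tsum_integral_lpSingle_le {I : Type*} [Fintype I] (g : I → lp (fun _ : ℕ => ℂ) 2)
    {lam : ℕ → ℝ} {M L : ℝ} (hlam : ∀ n, |lam n| ≤ M) (hM : 1 ≤ M) (hL : 0 ≤ L) (n : ℕ) :
    ∑' i : I, ∫ t in (0 : ℝ)..L,
        ‖∑' m : ℕ, starRingEnd ℂ (lp.single (E := fun _ : ℕ => ℂ) 2 n 1 m) *
          ((lam m : ℂ) ^ (t : ℂ)) * g i m‖ ^ 2
      ≤ L * (M ^ L) ^ 2 * ∑ i, ‖g i n‖ ^ 2 := by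
  simp only [tsum_conj_lpSingle_mul_mul, tsum_fintype, Finset.mul_sum]
  exact Finset.sum_le_sum fun i _ => integral_norm_ofReal_cpow_mul_sq_le (hlam n) hM hL _

theorem diagonal_lower_frame_bound_implies_infinite_generators_general
    (lam : ℕ → ℝ) (hlam : ∃ M : ℝ, ∀ n : ℕ, |lam n| ≤ M)
    (L : ℝ) (hL : 0 < L)
    {I : Type*} (g : I → lp (fun _ : ℕ => ℂ) 2)
    (C : ℝ) (hC : 0 < C)
    (hlow : ∀ f : lp (fun _ : ℕ => ℂ) 2,
      C * ‖f‖ ^ 2 ≤ ∑' i : I, ∫ t in (0 : ℝ)..L,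
        ‖∑' n : ℕ, (starRingEnd ℂ) (f n) * ((lam n : ℂ) ^ (t : ℂ)) * g i n‖ ^ 2) :
    Infinite I := by
  by_contra hfin
  rw [not_infinite_iff_finite] at hfin
  have := Fintype.ofFinite I
  obtain ⟨M, hM⟩ := hlam
  set K := L * (max M 1 ^ L) ^ 2
  have hC_le : ∀ n, C ≤ K * ∑ i, ‖g i n‖ ^ 2 := fun n => by
    have hδ := hlow (lp.single 2 n 1)
    rw [lp.norm_single (by norm_num), norm_one, one_pow, mul_one] at hδ
    exact hδ.trans <| tsum_integral_lpSingle_le g (fun n => (hM n).trans (le_max_left M 1))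
      (le_max_right M 1) hL.le n
  have hlim : Tendsto (fun n => K * ∑ i, ‖g i n‖ ^ 2) atTop (𝓝 0) := by
    simpa using (tendsto_finsetSum _ fun i _ => lp.tendsto_norm_sq_atTop_zero (g i)).const_mul K
  exact hC.not_ge (ge_of_tendsto' hlim hC_le)

/-- If the semi-continuous system `{D^t gᵢ : i ∈ I, t ∈ [0,L]}` generated by a bounded
diagonal operator `D` (with real diagonal `lam`) on `ℓ²(ℕ, ℂ)` satisfies a lower frame
bound, then the index set `I` is infinite. -/
theorem diagonal_lower_frame_bound_implies_infinite_generators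
    (lam : ℕ → ℝ) (hlam : ∃ M : ℝ, ∀ n : ℕ, |lam n| ≤ M)
    (L : ℝ) (hL : 0 < L)
    {I : Type*} [Countable I] (g : I → lp (fun _ : ℕ => ℂ) 2)
    (C : ℝ) (hC : 0 < C)
    (hlow : ∀ f : lp (fun _ : ℕ => ℂ) 2,
      C * ‖f‖ ^ 2 ≤ ∑' i : I, ∫ t in (0 : ℝ)..L,
        ‖∑' n : ℕ, (starRingEnd ℂ) (f n) * ((lam n : ℂ) ^ (t : ℂ)) * g i n‖ ^ 2) :
    Infinite I :=
  diagonal_lower_frame_bound_implies_infinite_generators_general lam hlam L hL g C hC hlow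
end
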